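/- No mechanism that selects a stable allocation whenever one exists can be strategy-proof for asylum seekers in the setting of Example 7: for any such mechanism φ, either asylum seeker a₂ has a profitable misreport P̂_{a₂} under the true profile P, or asylum seeker a₁ has a profitable misreport P̂_{a₁} under the profile (P̂_{a₂}, P_{−a₂}). -/

import Mathlib

/-- A contract: `(asylum seeker, member state, wait time)`.  Asylum seekers,
member states and wait times are labelled by naturals. -/
abbrev Ctr3 := ℕ × ℕ × ℕ

open Classical in
/-- Pick, from a nonempty set of contracts at member state `m`, the
lowest-wait-time contract of the highest-priority asylum seeker. -/
noncomputable def pick3 (π : ℕ → ℕ) (m : ℕ) (Z : Finset Ctr3)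
    (h : Z.Nonempty) : Ctr3 :=
  let k := (Z.image fun x => toLex ((π x.1 : ℕ), toLex (x.2.2, x.1))).min'
    (h.image _)
  ((ofLex (ofLex k).2).2, m, (ofLex (ofLex k).2).1)

open Classical in
/-- The greedy run of member state `m`'s choice rule `Ĉ_m`, with fuel:
process asylum seekers by priority `π`, accept for each the lowest-wait-time
contract with remaining capacity, stop at quota `q`. -/
noncomputable def run3 (s : ℕ → ℕ) (q : ℕ) (r π : ℕ → ℕ) (m : ℕ)
    (X' : Finset Ctr3) : ℕ → Finset Ctr3 → Finset Ctr3
  | 0, acc => acc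
  | n+1, acc =>
    let Z : Finset Ctr3 := X'.filter fun x => x.2.1 = m ∧
      (acc.filter fun y => y.2.2 = x.2.2).card < r x.2.2 ∧
      ∀ y ∈ acc, y.1 ≠ x.1
    if q ≤ acc.sum (fun x => s x.1) then acc
    else if h : Z.Nonempty then
      run3 s q r π m X' n (insert (pick3 π m Z h) acc)
    else acc

/-- Member state `m`'s choice rule `Ĉ_m` on sets of contracts. -/
noncomputable def Chat3 (s : ℕ → ℕ) (q : ℕ) (r π : ℕ → ℕ) (m : ℕ)
    (X' : Finset Ctr3) : Finset Ctr3 :=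
  run3 s q r π m X' (X'.card + 1) ∅

/-- Priorities of Example 7: `m₂` ranks `a₃ − a₂ − a₁`; the other member
states rank `a₁ − a₂ − a₃` (states `m₁ m₂ m₃ m₄ = 0 1 2 3`, asylum seekers
`a₁ a₂ a₃ = 0 1 2`). -/
def π16 : ℕ → ℕ → ℕ := fun m a => if m = 1 then 2 - a else a

/-- Quotas of Example 7: `q_{m₁} = s(a₁)`, `q_{m₂} = q_{m₃} = 1`,
`q_{m₄} = Σ_a s(a)`. -/
def q16 (s : ℕ → ℕ) : ℕ → ℕ :=
  fun m => if m = 0 then s 0 else if m = 3 then s 0 + s 1 + s 2 else 1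

/-- Capacities of Example 7 (wait times `w_l w_h = 0 1`):
`r^{w_l}_m = 2` and `r^{w_h}_m = Σ_a s(a)` for every member state. -/
def r16 (s : ℕ → ℕ) : ℕ → ℕ → ℕ :=
  fun _ w => if w = 0 then 2 else s 0 + s 1 + s 2

/-- An allocation: at most one contract per asylum seeker, capacities
respected, contracts drawn from the universe of the instance. -/
def Alloc16 (s : ℕ → ℕ) (Y : Finset Ctr3) : Prop :=
  (∀ x ∈ Y, x.1 < 3 ∧ x.2.1 < 4 ∧ x.2.2 < 2) ∧
  (∀ a : ℕ, (Y.filter fun x => x.1 = a).card ≤ 1) ∧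
  (∀ m w : ℕ, (Y.filter fun x => x.2.1 = m ∧ x.2.2 = w).card ≤ r16 s m w)

/-- Stability with respect to the preference profile `p` (where `p a` ranks
`a`'s contracts, lower value = better). -/
def Stable16 (s : ℕ → ℕ) (p : ℕ → Ctr3 → ℕ) (Y : Finset Ctr3) : Prop :=
  (∀ m : ℕ, Chat3 s (q16 s m) (r16 s m) (π16 m) m Y =
    Y.filter fun x => x.2.1 = m) ∧
  ∀ x : Ctr3, x.1 < 3 → x.2.1 < 4 → x.2.2 < 2 → x ∉ Y →
    (∀ y ∈ Y, y.1 = x.1 → p x.1 x < p x.1 y) →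
    x ∉ Chat3 s (q16 s x.2.1) (r16 s x.2.1) (π16 x.2.1) x.2.1 (insert x Y)

/-!
Under the true profile every stable allocation gives `a₂` the contract `x₆`: `a₁` holds `x₁` or
`x₂`, and `x₁` is impossible since `m₂` takes a single contract and `x₄` would then block; with
`x₂` filling `m₁`, `a₃` is pushed to `x₈` at `m₂`, and `a₂` to `x₆`. Once `a₂` reports
`x₅ − x₆ − x₄`, the allocation `Y₂ = {x₁, x₅, x₇}` is stable, and whenever `a₁` holds `x₁` the
state `m₁` ranks `a₂` first among those present, so `a₂` holds `x₅`, a gain over `x₆`. Otherwise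
`a₁` does not get `x₁`, and she gains by reporting `x₁ − x₃ − x₂`: then `x₃` is always chosen
at `m₃`, and if she held it, `a₂` and `a₃` would both end up at `m₁`, `m₂` would be empty, and
`x₁` would block.
-/

open Finset

section ChoiceRule

variable {s : ℕ → ℕ} {q : ℕ} {r π : ℕ → ℕ} {m : ℕ} {X acc : Finset Ctr3}

/-- The sort key of `pick3`. -/
def key3 (π : ℕ → ℕ) (x : Ctr3) : ℕ ×ₗ (ℕ ×ₗ ℕ) :=
  toLex (π x.1, toLex (x.2.2, x.1))

/-- The candidate set `Z` of one step of `run3`. -/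
def avail3 (r : ℕ → ℕ) (m : ℕ) (X acc : Finset Ctr3) : Finset Ctr3 :=
  X.filter fun x => x.2.1 = m ∧ (acc.filter fun y => y.2.2 = x.2.2).card < r x.2.2 ∧
    ∀ y ∈ acc, y.1 ≠ x.1

lemma key3_le_iff {c z : Ctr3} :
    key3 π c ≤ key3 π z ↔ π c.1 < π z.1 ∨
      π c.1 = π z.1 ∧ (c.2.2 < z.2.2 ∨ c.2.2 = z.2.2 ∧ c.1 ≤ z.1) := by
  simp [key3, Prod.Lex.le_iff]

lemma pick3_eq_of_forall_le {Z : Finset Ctr3} (h : Z.Nonempty) {c : Ctr3} (hc : c ∈ Z)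
    (hm : c.2.1 = m) (hmin : ∀ z ∈ Z, key3 π c ≤ key3 π z) : pick3 π m Z h = c := by
  have hk : (Z.image (key3 π)).min' (h.image _) = key3 π c :=
    le_antisymm (min'_le _ _ (mem_image_of_mem _ hc)) (le_min' _ _ _ fun _ hy => by
      obtain ⟨z, hz, rfl⟩ := mem_image.1 hy
      exact hmin z hz)
  simp only [pick3, ← key3.eq_1, hk]
  exact Prod.ext rfl (Prod.ext hm.symm rfl)

lemma pick3_mem {Z : Finset Ctr3} (h : Z.Nonempty) (hZ : ∀ z ∈ Z, z.2.1 = m) :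
    pick3 π m Z h ∈ Z := by
  obtain ⟨c, hc, hmin⟩ := Z.exists_min_image (key3 π) h
  rwa [pick3_eq_of_forall_le h hc (hZ c hc) hmin]

lemma run3_succ (n : ℕ) (acc : Finset Ctr3) :
    run3 s q r π m X (n + 1) acc =
      if q ≤ acc.sum (fun x => s x.1) then acc
      else if h : (avail3 r m X acc).Nonempty then
        run3 s q r π m X n (insert (pick3 π m _ h) acc)
      else acc :=
  rfl

lemma run3_of_quota_le (h : q ≤ acc.sum fun x => s x.1) (n : ℕ) :
    run3 s q r π m X n acc = acc := by
  cases n <;> simp [run3, h]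

lemma subset_run3 (n : ℕ) (acc : Finset Ctr3) : acc ⊆ run3 s q r π m X n acc := by
  induction n generalizing acc with
  | zero => exact Subset.rfl
  | succ n ih =>
    rw [run3_succ]
    split_ifs
    · exact Subset.rfl
    · exact (subset_insert _ _).trans (ih _)
    · exact Subset.rfl

lemma run3_subset (n : ℕ) (acc : Finset Ctr3) :
    run3 s q r π m X n acc ⊆ acc ∪ X.filter fun x => x.2.1 = m := by
  induction n generalizing acc with
  | zero => exact subset_union_left
  | succ n ih =>
    rw [run3_succ]
    split_ifs with _ h
    · exact subset_union_left
    · have hpick := mem_filter.1 (pick3_mem (π := π) h fun z hz => (mem_filter.1 hz).2.1)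
      refine (ih _).trans (union_subset (insert_subset ?_ subset_union_left) subset_union_right)
      exact mem_union_right _ (mem_filter.2 ⟨hpick.1, hpick.2.1⟩)
    · exact subset_union_left

lemma Chat3_subset : Chat3 s q r π m X ⊆ X.filter fun x => x.2.1 = m := by
  have h := run3_subset (s := s) (q := q) (r := r) (π := π) (m := m) (X := X) (X.card + 1) ∅
  rwa [empty_union] at h

lemma Chat3_card_le_one (hq : ∀ a, q ≤ s a) : (Chat3 s q r π m X).card ≤ 1 := by
  rw [Chat3, run3_succ]
  split_ifs
  · simp
  · rw [run3_of_quota_le (by simpa using hq _)]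
    simp
  · simp

lemma Chat3_eq_run3_of_forall_le {c : Ctr3} (hc : c ∈ X) (hm : c.2.1 = m)
    (hr : 0 < r c.2.2) (hq : 0 < q) (hmin : ∀ z ∈ X, z.2.1 = m → key3 π c ≤ key3 π z) :
    Chat3 s q r π m X = run3 s q r π m X X.card {c} := by
  have hcZ : c ∈ avail3 r m X ∅ := by simp [avail3, hc, hm, hr]
  have hpick : pick3 π m _ ⟨c, hcZ⟩ = c :=
    pick3_eq_of_forall_le _ hcZ hm fun z hz => hmin z (mem_filter.1 hz).1 (mem_filter.1 hz).2.1
  rw [Chat3, run3_succ, if_neg (by simpa using hq.ne'), dif_pos ⟨c, hcZ⟩, hpick]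
  rfl

lemma mem_Chat3_of_forall_le {c : Ctr3} (hc : c ∈ X) (hm : c.2.1 = m)
    (hr : 0 < r c.2.2) (hq : 0 < q) (hmin : ∀ z ∈ X, z.2.1 = m → key3 π c ≤ key3 π z) :
    c ∈ Chat3 s q r π m X := by
  rw [Chat3_eq_run3_of_forall_le hc hm hr hq hmin]
  exact subset_run3 _ _ (mem_singleton_self c)

lemma mem_Chat3_insert_of_forall_le {c : Ctr3} (hm : c.2.1 = m) (hr : 0 < r c.2.2) (hq : 0 < q)
    (hmin : ∀ z ∈ X, z.2.1 = m → key3 π c ≤ key3 π z) : c ∈ Chat3 s q r π m (insert c X) :=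
  mem_Chat3_of_forall_le (mem_insert_self c X) hm hr hq fun z hz hzm => by
    rcases mem_insert.1 hz with rfl | hz
    exacts [le_rfl, hmin z hz hzm]

lemma Chat3_eq_singleton_of_forall_le {c : Ctr3} (hc : c ∈ X) (hm : c.2.1 = m)
    (hr : 0 < r c.2.2) (hq : 0 < q) (hqc : q ≤ s c.1)
    (hmin : ∀ z ∈ X, z.2.1 = m → key3 π c ≤ key3 π z) :
    Chat3 s q r π m X = {c} := by
  rw [Chat3_eq_run3_of_forall_le hc hm hr hq hmin, run3_of_quota_le (by simpa using hqc)]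

lemma mem_Chat3_of_forall_le_of_ne {c d : Ctr3} (hc : c ∈ X) (hd : d ∈ X)
    (hcm : c.2.1 = m) (hdm : d.2.1 = m) (hne : d.1 ≠ c.1) (hq : 0 < q) (hqc : ¬ q ≤ s c.1)
    (hrc : 0 < r c.2.2) (hrd : 1 < r d.2.2)
    (hminc : ∀ z ∈ X, z.2.1 = m → key3 π c ≤ key3 π z)
    (hmind : ∀ z ∈ X, z.2.1 = m → z.1 ≠ c.1 → key3 π d ≤ key3 π z) :
    d ∈ Chat3 s q r π m X := by
  obtain ⟨k, hk⟩ : ∃ k, X.card = k + 1 := Nat.exists_eq_add_one.2 (card_pos.2 ⟨c, hc⟩)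
  have hdZ : d ∈ avail3 r m X {c} := by
    simp only [avail3, mem_filter, mem_singleton, forall_eq]
    refine ⟨hd, hdm, (card_le_one.2 ?_).trans_lt hrd, Ne.symm hne⟩
    simp
  have hpick : pick3 π m _ ⟨d, hdZ⟩ = d := by
    refine pick3_eq_of_forall_le _ hdZ hdm fun z hz => ?_
    simp only [avail3, mem_filter, mem_singleton, forall_eq] at hz
    exact hmind z hz.1 hz.2.1 (Ne.symm hz.2.2.2)
  rw [Chat3_eq_run3_of_forall_le hc hcm hrc hq hminc, hk, run3_succ,
    if_neg (by simpa using hqc), dif_pos ⟨d, hdZ⟩, hpick]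
  exact subset_run3 _ _ (mem_insert_self d _)

end ChoiceRule

section Allocations

variable {s : ℕ → ℕ} {p : ℕ → Ctr3 → ℕ} {Y : Finset Ctr3}

lemma q16_pos (hpos : ∀ a, 0 < s a) (m : ℕ) : 0 < q16 s m := by
  have := hpos 0
  unfold q16
  split_ifs <;> omega

lemma two_le_r16 (hpos : ∀ a, 0 < s a) (m w : ℕ) : 2 ≤ r16 s m w := by
  have := hpos 0
  have := hpos 1
  have := hpos 2
  unfold r16
  split_ifs <;> omega

lemma Alloc16.eq_of_fst_eq (hY : Alloc16 s Y) {x y : Ctr3} (hx : x ∈ Y) (hy : y ∈ Y)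
    (h : x.1 = y.1) : x = y :=
  card_le_one.1 (hY.2.1 x.1) x (mem_filter.2 ⟨hx, rfl⟩) y (mem_filter.2 ⟨hy, h.symm⟩)

lemma Alloc16.fst_ne_of_snd_fst_ne (hY : Alloc16 s Y) {y z : Ctr3} (hz : z ∈ Y) (hy : y ∈ Y)
    (h : z.2.1 ≠ y.2.1) : z.1 ≠ y.1 :=
  fun h' => h (by rw [hY.eq_of_fst_eq hz hy h'])

/-- Every capacity is at least two, and no state receives all three contracts. -/
lemma alloc16_of (hpos : ∀ a, 0 < s a) (hbound : ∀ x ∈ Y, x.1 < 3 ∧ x.2.1 < 4 ∧ x.2.2 < 2)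
    (hinj : ∀ x ∈ Y, ∀ y ∈ Y, x.1 = y.1 → x = y)
    (hstates : ∃ x ∈ Y, ∃ y ∈ Y, x.2.1 ≠ y.2.1) : Alloc16 s Y := by
  refine ⟨hbound, fun a => card_le_one.2 fun x hx y hy => ?_, fun m w => ?_⟩
  · rw [mem_filter] at hx hy
    exact hinj x hx.1 y hy.1 (hx.2.trans hy.2.symm)
  have hcard : Y.card ≤ 3 := by
    simpa using card_le_card_of_injOn (t := range 3) Prod.fst
      (fun x hx => by simpa using (hbound x hx).1) fun x hx y hy => hinj x hx y hy
  have hss : Y.filter (fun x => x.2.1 = m ∧ x.2.2 = w) ⊂ Y := by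
    rw [filter_ssubset]
    obtain ⟨x, hx, y, hy, hxy⟩ := hstates
    by_cases hxm : x.2.1 = m
    · exact ⟨y, hy, fun h => hxy (hxm.trans h.1.symm)⟩
    · exact ⟨x, hx, fun h => hxm h.1⟩
  have := card_lt_card hss
  have := two_le_r16 hpos m w
  omega

lemma forall_Chat3_eq_filter
    (h : ∀ z ∈ Y, z ∈ Chat3 s (q16 s z.2.1) (r16 s z.2.1) (π16 z.2.1) z.2.1 Y) (m : ℕ) :
    Chat3 s (q16 s m) (r16 s m) (π16 m) m Y = Y.filter fun x => x.2.1 = m :=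
  Chat3_subset.antisymm fun z hz => by
    obtain ⟨hzY, rfl⟩ := mem_filter.1 hz
    exact h z hzY

lemma Stable16.exists_pref_le (hst : Stable16 s p Y) {x : Ctr3}
    (hb : x.1 < 3 ∧ x.2.1 < 4 ∧ x.2.2 < 2)
    (hx : x ∈ Chat3 s (q16 s x.2.1) (r16 s x.2.1) (π16 x.2.1) x.2.1 (insert x Y)) :
    ∃ y ∈ Y, y.1 = x.1 ∧ p x.1 y ≤ p x.1 x := by
  by_cases hxY : x ∈ Y
  · exact ⟨x, hxY, rfl, le_rfl⟩
  · by_contra! h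
    exact hst.2 x hb.1 hb.2.1 hb.2.2 hxY h hx

lemma Stable16.mem_of_forall_lt (hst : Stable16 s p Y) {x : Ctr3}
    (hb : x.1 < 3 ∧ x.2.1 < 4 ∧ x.2.2 < 2)
    (hx : x ∈ Chat3 s (q16 s x.2.1) (r16 s x.2.1) (π16 x.2.1) x.2.1 (insert x Y))
    (htop : ∀ z : Ctr3, z.1 = x.1 → z ≠ x → p x.1 x < p x.1 z) : x ∈ Y := by
  obtain ⟨y, hyY, hy1, hyle⟩ := hst.exists_pref_le hb hx
  obtain rfl : y = x := by
    by_contra h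
    exact (htop y hy1 h).not_ge hyle
  exact hyY

lemma Stable16.eq_of_snd_fst_eq (hst : Stable16 s p Y) {m : ℕ} (hq : ∀ a, q16 s m ≤ s a)
    {u v : Ctr3} (hu : u ∈ Y) (hv : v ∈ Y) (hum : u.2.1 = m) (hvm : v.2.1 = m) : u = v := by
  have h := Chat3_card_le_one (r := r16 s m) (π := π16 m) (m := m) (X := Y) hq
  rw [hst.1 m] at h
  exact card_le_one.1 h u (mem_filter.2 ⟨hu, hum⟩) v (mem_filter.2 ⟨hv, hvm⟩)

end Allocations

notation "x₁" => ((0, 1, 0) : Ctr3)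
notation "x₂" => ((0, 0, 0) : Ctr3)
notation "x₃" => ((0, 2, 0) : Ctr3)
notation "x₄" => ((1, 1, 0) : Ctr3)
notation "x₅" => ((1, 0, 0) : Ctr3)
notation "x₆" => ((1, 2, 0) : Ctr3)
notation "x₇" => ((2, 0, 0) : Ctr3)
notation "x₈" => ((2, 1, 0) : Ctr3)

def Y₁ : Finset Ctr3 := {x₂, x₆, x₈}

def Y₂ : Finset Ctr3 := {x₁, x₅, x₇}

section Example7

variable {s : ℕ → ℕ} {p : ℕ → Ctr3 → ℕ} {X Y : Finset Ctr3} {z : Ctr3}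

lemma key3_x₂_le : key3 (π16 0) x₂ ≤ key3 (π16 0) z := by
  simp only [key3_le_iff, π16, zero_ne_one, ↓reduceIte, zero_le, and_true]
  omega

lemma key3_x₈_le : key3 (π16 1) x₈ ≤ key3 (π16 1) z := by
  simp only [key3_le_iff, π16, ↓reduceIte, tsub_self, tsub_pos_iff_lt, Order.lt_two_iff]
  omega

lemma key3_x₃_le : key3 (π16 2) x₃ ≤ key3 (π16 2) z := by
  simp only [key3_le_iff, π16, OfNat.ofNat_ne_one, ↓reduceIte, zero_le, and_true]
  omega

lemma key3_x₅_le (hz : z.1 ≠ 0) : key3 (π16 0) x₅ ≤ key3 (π16 0) z := by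
  simp only [key3_le_iff, π16, zero_ne_one, ↓reduceIte]
  omega

lemma key3_x₆_le (hz : z.1 ≠ 0) : key3 (π16 2) x₆ ≤ key3 (π16 2) z := by
  simp only [key3_le_iff, π16, OfNat.ofNat_ne_one, ↓reduceIte]
  omega

lemma key3_x₇_le (hz₀ : z.1 ≠ 0) (hz₁ : z.1 ≠ 1) : key3 (π16 0) x₇ ≤ key3 (π16 0) z := by
  simp only [key3_le_iff, π16, zero_ne_one, ↓reduceIte]
  omega

lemma Chat3_eq_x₂ (hpos : ∀ a, 0 < s a) (hX : x₂ ∈ X) :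
    Chat3 s (q16 s 0) (r16 s 0) (π16 0) 0 X = {x₂} :=
  Chat3_eq_singleton_of_forall_le hX rfl two_pos (q16_pos hpos 0) le_rfl
    fun _ _ _ => key3_x₂_le

lemma Chat3_eq_x₈ (hpos : ∀ a, 0 < s a) (hX : x₈ ∈ X) :
    Chat3 s (q16 s 1) (r16 s 1) (π16 1) 1 X = {x₈} :=
  Chat3_eq_singleton_of_forall_le hX rfl two_pos (q16_pos hpos 1)
    (hpos 2) fun _ _ _ => key3_x₈_le

lemma alloc16_Y₁ (hpos : ∀ a, 0 < s a) : Alloc16 s Y₁ :=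
  alloc16_of hpos (by decide) (by decide) ⟨x₂, by decide, x₆, by decide, by decide⟩

lemma alloc16_Y₂ (hpos : ∀ a, 0 < s a) : Alloc16 s Y₂ :=
  alloc16_of hpos (by decide) (by decide) ⟨x₁, by decide, x₅, by decide, by decide⟩

lemma stable16_Y₁ (hpos : ∀ a, 0 < s a)
    (h1b : ∀ z : Ctr3, z.1 = 0 → z ≠ x₁ → z ≠ x₂ → p 0 x₂ < p 0 z)
    (h2c : ∀ z : Ctr3, z.1 = 1 → z ≠ x₄ → z ≠ x₅ → z ≠ x₆ → p 1 x₆ < p 1 z)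
    (h3b : ∀ z : Ctr3, z.1 = 2 → z ≠ x₇ → z ≠ x₈ → p 2 x₈ < p 2 z) :
    Stable16 s p Y₁ := by
  refine ⟨forall_Chat3_eq_filter fun z hz => ?_, fun x ha _ _ hxY hpref => ?_⟩
  · simp only [Y₁, mem_insert, mem_singleton] at hz
    rcases hz with rfl | rfl | rfl
    · simp [Chat3_eq_x₂ hpos (by decide : x₂ ∈ Y₁)]
    · exact mem_Chat3_of_forall_le (by decide) rfl two_pos (q16_pos hpos 2) (by decide)
    · simp [Chat3_eq_x₈ hpos (by decide : x₈ ∈ Y₁)]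
  have hx : x = x₁ ∨ x = x₄ ∨ x = x₅ ∨ x = x₇ := by
    obtain ⟨a, m, w⟩ := x
    have hne : ∀ y ∈ Y₁, (a, m, w) ≠ y := fun y hy h => hxY (h ▸ hy)
    simp only at ha
    interval_cases a
    · by_contra! h
      exact (h1b _ rfl h.1 (hne _ (by decide))).not_gt (hpref x₂ (by decide) rfl)
    · by_contra! h
      exact (h2c _ rfl h.2.1 h.2.2.1 (hne _ (by decide))).not_gt (hpref x₆ (by decide) rfl)
    · by_contra! h
      exact (h3b _ rfl h.2.2.2 (hne _ (by decide))).not_gt (hpref x₈ (by decide) rfl)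
  rcases hx with rfl | rfl | rfl | rfl
  · simp [Chat3_eq_x₈ hpos (by decide : x₈ ∈ insert x₁ Y₁)]
  · simp [Chat3_eq_x₈ hpos (by decide : x₈ ∈ insert x₄ Y₁)]
  · simp [Chat3_eq_x₂ hpos (by decide : x₂ ∈ insert x₅ Y₁)]
  · simp [Chat3_eq_x₂ hpos (by decide : x₂ ∈ insert x₇ Y₁)]

lemma stable16_Y₂ (hpos : ∀ a, 0 < s a) (h01 : s 1 < s 0)
    (h1 : ∀ z : Ctr3, z.1 = 0 → z ≠ x₁ → p 0 x₁ < p 0 z)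
    (h2 : ∀ z : Ctr3, z.1 = 1 → z ≠ x₅ → p 1 x₅ < p 1 z)
    (h3 : ∀ z : Ctr3, z.1 = 2 → z ≠ x₇ → p 2 x₇ < p 2 z) :
    Stable16 s p Y₂ := by
  refine ⟨forall_Chat3_eq_filter fun z hz => ?_, fun x ha _ _ hxY hpref => ?_⟩
  · simp only [Y₂, mem_insert, mem_singleton] at hz
    rcases hz with rfl | rfl | rfl
    · exact mem_Chat3_of_forall_le (by decide) rfl two_pos (q16_pos hpos 1) (by decide)
    · exact mem_Chat3_of_forall_le (by decide) rfl two_pos (q16_pos hpos 0) (by decide)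
    · exact mem_Chat3_of_forall_le_of_ne (c := x₅) (by decide) (by decide) rfl rfl (by decide)
        (q16_pos hpos 0) h01.not_ge two_pos one_lt_two
        (by decide) (by decide)
  obtain ⟨y, hyY, hy1, htop⟩ : ∃ y ∈ Y₂, y.1 = x.1 ∧
      ∀ z : Ctr3, z.1 = x.1 → z ≠ y → p x.1 y < p x.1 z := by
    obtain ⟨a, m, w⟩ := x
    simp only at ha
    interval_cases a
    exacts [⟨x₁, by decide, rfl, h1⟩, ⟨x₅, by decide, rfl, h2⟩, ⟨x₇, by decide, rfl, h3⟩]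
  exact ((htop x rfl fun h => hxY (h ▸ hyY)).asymm (hpref y hyY hy1)).elim

lemma x₅_mem_of_stable (hpos : ∀ a, 0 < s a) (hY : Alloc16 s Y) (hst : Stable16 s p Y)
    (h2 : ∀ z : Ctr3, z.1 = 1 → z ≠ x₅ → p 1 x₅ < p 1 z)
    {y : Ctr3} (hy : y ∈ Y) (hy₀ : y.1 = 0) (hym : y.2.1 ≠ 0) : x₅ ∈ Y :=
  hst.mem_of_forall_lt (by decide)
    (mem_Chat3_insert_of_forall_le rfl two_pos (q16_pos hpos 0) fun z hz hzm =>
      key3_x₅_le (hy₀ ▸ hY.fst_ne_of_snd_fst_ne hz hy (by rw [hzm]; exact hym.symm))) h2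

lemma x₆_mem_of_stable (hpos : ∀ a, 0 < s a) (hY : Alloc16 s Y) (hst : Stable16 s p Y)
    (h1b : ∀ z : Ctr3, z.1 = 0 → z ≠ x₁ → z ≠ x₂ → p 0 x₂ < p 0 z)
    (h2a : ∀ z : Ctr3, z.1 = 1 → z ≠ x₄ → p 1 x₄ < p 1 z)
    (h2c : ∀ z : Ctr3, z.1 = 1 → z ≠ x₄ → z ≠ x₅ → z ≠ x₆ → p 1 x₆ < p 1 z)
    (h3b : ∀ z : Ctr3, z.1 = 2 → z ≠ x₇ → z ≠ x₈ → p 2 x₈ < p 2 z) : x₆ ∈ Y := by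
  have hm₂ : ∀ {u v : Ctr3}, u ∈ Y → v ∈ Y → u.2.1 = 1 → v.2.1 = 1 → u = v :=
    hst.eq_of_snd_fst_eq (m := 1) hpos
  obtain ⟨y₁, hy₁, hy₁a, hy₁le⟩ := hst.exists_pref_le (x := x₂) (by decide)
    (mem_Chat3_insert_of_forall_le rfl two_pos (q16_pos hpos 0) fun _ _ _ => key3_x₂_le)
  obtain rfl | rfl : y₁ = x₁ ∨ y₁ = x₂ := by
    by_contra! h
    exact (h1b y₁ hy₁a h.1 h.2).not_ge hy₁le
  · -- `a₁` holds `x₁`, the only contract at `m₂`; then `x₄` blocks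
    have hx₄ : x₄ ∈ Y := hst.mem_of_forall_lt (by decide)
      (mem_Chat3_insert_of_forall_le rfl two_pos (q16_pos hpos 1) fun z hz hzm => by
        rw [hm₂ hz hy₁ hzm rfl]
        decide) h2a
    exact absurd (hm₂ hx₄ hy₁ rfl rfl) (by decide)
  have hm₁ : ∀ u ∈ Y, u.2.1 = 0 → u = x₂ := fun u hu hum => by
    have h : u ∈ Y.filter fun x => x.2.1 = 0 := mem_filter.2 ⟨hu, hum⟩
    rwa [← hst.1 0, Chat3_eq_x₂ hpos hy₁, mem_singleton] at h
  obtain ⟨y₃, hy₃, hy₃a, hy₃le⟩ := hst.exists_pref_le (x := x₈) (by decide)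
    (mem_Chat3_insert_of_forall_le rfl two_pos (q16_pos hpos 1) fun _ _ _ => key3_x₈_le)
  obtain rfl | rfl : y₃ = x₇ ∨ y₃ = x₈ := by
    by_contra! h
    exact (h3b y₃ hy₃a h.1 h.2).not_ge hy₃le
  · exact absurd (hm₁ _ hy₃ rfl) (by decide)
  obtain ⟨y₂, hy₂, hy₂a, hy₂le⟩ := hst.exists_pref_le (x := x₆) (by decide)
    (mem_Chat3_insert_of_forall_le rfl two_pos (q16_pos hpos 2) fun z hz hzm =>
      key3_x₆_le (hY.fst_ne_of_snd_fst_ne hz hy₁ (by rw [hzm]; decide)))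
  obtain rfl | rfl | rfl : y₂ = x₄ ∨ y₂ = x₅ ∨ y₂ = x₆ := by
    by_contra! h
    exact (h2c y₂ hy₂a h.1 h.2.1 h.2.2).not_ge hy₂le
  · exact absurd (hm₂ hy₂ hy₃ rfl rfl) (by decide)
  · exact absurd (hm₁ _ hy₂ rfl) (by decide)
  · exact hy₂

lemma x₁_mem_of_stable (hpos : ∀ a, 0 < s a) (h01 : s 1 < s 0) (hY : Alloc16 s Y)
    (hst : Stable16 s p Y)
    (j1a : ∀ z : Ctr3, z.1 = 0 → z ≠ x₁ → p 0 x₁ < p 0 z)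
    (j1b : ∀ z : Ctr3, z.1 = 0 → z ≠ x₁ → z ≠ x₃ → p 0 x₃ < p 0 z)
    (h2 : ∀ z : Ctr3, z.1 = 1 → z ≠ x₅ → p 1 x₅ < p 1 z)
    (h3 : ∀ z : Ctr3, z.1 = 2 → z ≠ x₇ → p 2 x₇ < p 2 z) : x₁ ∈ Y := by
  obtain ⟨y₁, hy₁, hy₁a, hy₁le⟩ := hst.exists_pref_le (x := x₃) (by decide)
    (mem_Chat3_insert_of_forall_le rfl two_pos (q16_pos hpos 2) fun _ _ _ => key3_x₃_le)
  obtain rfl | rfl : y₁ = x₁ ∨ y₁ = x₃ := by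
    by_contra! h
    exact (j1b y₁ hy₁a h.1 h.2).not_ge hy₁le
  · exact hy₁
  exfalso
  have hm₁ : ∀ z ∈ Y, z.2.1 = 0 → z.1 ≠ 0 := fun z hz hzm =>
    hY.fst_ne_of_snd_fst_ne hz hy₁ (by rw [hzm]; decide)
  have hx₅ : x₅ ∈ Y := x₅_mem_of_stable hpos hY hst h2 hy₁ rfl (by decide)
  have hx₇ : x₇ ∈ Y := hst.mem_of_forall_lt (by decide)
    (mem_Chat3_of_forall_le_of_ne (c := x₅) (mem_insert_of_mem hx₅) (mem_insert_self _ _)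
      rfl rfl (by decide) (q16_pos hpos 0) h01.not_ge two_pos
      one_lt_two
      (fun z hz hzm => by
        rcases mem_insert.1 hz with rfl | hz
        exacts [by decide, key3_x₅_le (hm₁ z hz hzm)])
      (fun z hz hzm hz₁ => by
        rcases mem_insert.1 hz with rfl | hz
        exacts [le_rfl, key3_x₇_le (hm₁ z hz hzm) hz₁])) h3
  have hY₂ : ∀ z ∈ Y, z = x₃ ∨ z = x₅ ∨ z = x₇ := fun z hz => by
    have := (hY.1 z hz).1
    obtain h | h | h : z.1 = 0 ∨ z.1 = 1 ∨ z.1 = 2 := by omega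
    exacts [.inl (hY.eq_of_fst_eq hz hy₁ h), .inr (.inl (hY.eq_of_fst_eq hz hx₅ h)),
      .inr (.inr (hY.eq_of_fst_eq hz hx₇ h))]
  have hx₁ : x₁ ∈ Y := hst.mem_of_forall_lt (by decide)
    (mem_Chat3_insert_of_forall_le rfl two_pos (q16_pos hpos 1) fun z hz hzm => by
      rcases hY₂ z hz with rfl | rfl | rfl <;> simp at hzm) j1a
  exact absurd (hY.eq_of_fst_eq hx₁ hy₁ rfl) (by decide)

end Example7

theorem ex7_no_stable_strategyproof_mechanism_general (s : ℕ → ℕ)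
    (hpos : ∀ a, 0 < s a) (h01 : s 1 < s 0)
    (pref : ℕ → Ctr3 → ℕ)
    (h1a : ∀ z : Ctr3, z.1 = 0 → z ≠ (0, 1, 0) →
      pref 0 (0, 1, 0) < pref 0 z)
    (h1b : ∀ z : Ctr3, z.1 = 0 → z ≠ (0, 1, 0) → z ≠ (0, 0, 0) →
      pref 0 (0, 0, 0) < pref 0 z)
    (h2a : ∀ z : Ctr3, z.1 = 1 → z ≠ (1, 1, 0) →
      pref 1 (1, 1, 0) < pref 1 z)
    (h2b : ∀ z : Ctr3, z.1 = 1 → z ≠ (1, 1, 0) → z ≠ (1, 0, 0) →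
      pref 1 (1, 0, 0) < pref 1 z)
    (h2c : ∀ z : Ctr3, z.1 = 1 → z ≠ (1, 1, 0) → z ≠ (1, 0, 0) →
      z ≠ (1, 2, 0) → pref 1 (1, 2, 0) < pref 1 z)
    (h3a : ∀ z : Ctr3, z.1 = 2 → z ≠ (2, 0, 0) →
      pref 2 (2, 0, 0) < pref 2 z)
    (h3b : ∀ z : Ctr3, z.1 = 2 → z ≠ (2, 0, 0) → z ≠ (2, 1, 0) →
      pref 2 (2, 1, 0) < pref 2 z)
    (pref2 : Ctr3 → ℕ)
    (k2a : ∀ z : Ctr3, z.1 = 1 → z ≠ (1, 0, 0) →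
      pref2 (1, 0, 0) < pref2 z)
    (pref1 : Ctr3 → ℕ)
    (j1a : ∀ z : Ctr3, z.1 = 0 → z ≠ (0, 1, 0) →
      pref1 (0, 1, 0) < pref1 z)
    (j1b : ∀ z : Ctr3, z.1 = 0 → z ≠ (0, 1, 0) → z ≠ (0, 2, 0) →
      pref1 (0, 2, 0) < pref1 z)
    (φ : (ℕ → Ctr3 → ℕ) → Finset Ctr3)
    (hφ : ∀ p : ℕ → Ctr3 → ℕ,
      (∃ Y : Finset Ctr3, Alloc16 s Y ∧ Stable16 s p Y) →
      Alloc16 s (φ p) ∧ Stable16 s p (φ p)) :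
    (∃ x ∈ φ (fun a => if a = 1 then pref2 else pref a), x.1 = 1 ∧
      ∀ y ∈ φ pref, y.1 = 1 → pref 1 x < pref 1 y) ∨
    (∃ x ∈ φ (fun a => if a = 0 then pref1 else
        if a = 1 then pref2 else pref a), x.1 = 0 ∧
      ∀ y ∈ φ (fun a => if a = 1 then pref2 else pref a), y.1 = 0 →
        pref 0 x < pref 0 y) := by
  obtain ⟨hY, hst⟩ := hφ pref ⟨Y₁, alloc16_Y₁ hpos, stable16_Y₁ hpos h1b h2c h3b⟩
  have hx₆ : x₆ ∈ φ pref := x₆_mem_of_stable hpos hY hst h1b h2a h2c h3b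
  obtain ⟨hY', hst'⟩ := hφ (fun a => if a = 1 then pref2 else pref a)
    ⟨Y₂, alloc16_Y₂ hpos, stable16_Y₂ hpos h01 h1a k2a h3a⟩
  by_cases hx₁ : x₁ ∈ φ (fun a => if a = 1 then pref2 else pref a)
  · refine .inl ⟨x₅, x₅_mem_of_stable hpos hY' hst' k2a hx₁ rfl (by decide), rfl,
      fun y hy hy₂ => ?_⟩
    rw [hY.eq_of_fst_eq hy hx₆ hy₂]
    exact h2b x₆ rfl (by decide) (by decide)
  · obtain ⟨hY'', hst''⟩ := hφ
      (fun a => if a = 0 then pref1 else if a = 1 then pref2 else pref a)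
      ⟨Y₂, alloc16_Y₂ hpos, stable16_Y₂ hpos h01 j1a k2a h3a⟩
    exact .inr ⟨x₁, x₁_mem_of_stable hpos h01 hY'' hst'' j1a j1b k2a h3a, rfl,
      fun y hy hy₁ => h1a y hy₁ (ne_of_mem_of_not_mem hy hx₁)⟩

/-- Theorem 3(ii), via Example 7: no mechanism `φ` that
selects a stable allocation whenever one exists is strategy-proof in the
Example 7 setting: either `a₂` profits from the misreport `x₅ − x₆ − x₄` at the
true profile, or `a₁` profits from the misreport `x₁ − x₃ − x₂` at the profile
where `a₂` has already misreported.  ("Profits" means: obtains a contract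
strictly preferred, under her true preferences, to everything she holds under
truthful reporting.) -/
theorem ex7_no_stable_strategyproof_mechanism (s : ℕ → ℕ)
    (hpos : ∀ a, 0 < s a) (h12 : s 2 ≤ s 1) (h01 : s 1 < s 0)
    (pref : ℕ → Ctr3 → ℕ) (hinj : ∀ a, Function.Injective (pref a))
    (h1a : ∀ z : Ctr3, z.1 = 0 → z ≠ (0, 1, 0) →
      pref 0 (0, 1, 0) < pref 0 z)
    (h1b : ∀ z : Ctr3, z.1 = 0 → z ≠ (0, 1, 0) → z ≠ (0, 0, 0) →
      pref 0 (0, 0, 0) < pref 0 z)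
    (h1c : ∀ z : Ctr3, z.1 = 0 → z ≠ (0, 1, 0) → z ≠ (0, 0, 0) →
      z ≠ (0, 2, 0) → pref 0 (0, 2, 0) < pref 0 z)
    (h2a : ∀ z : Ctr3, z.1 = 1 → z ≠ (1, 1, 0) →
      pref 1 (1, 1, 0) < pref 1 z)
    (h2b : ∀ z : Ctr3, z.1 = 1 → z ≠ (1, 1, 0) → z ≠ (1, 0, 0) →
      pref 1 (1, 0, 0) < pref 1 z)
    (h2c : ∀ z : Ctr3, z.1 = 1 → z ≠ (1, 1, 0) → z ≠ (1, 0, 0) →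
      z ≠ (1, 2, 0) → pref 1 (1, 2, 0) < pref 1 z)
    (h3a : ∀ z : Ctr3, z.1 = 2 → z ≠ (2, 0, 0) →
      pref 2 (2, 0, 0) < pref 2 z)
    (h3b : ∀ z : Ctr3, z.1 = 2 → z ≠ (2, 0, 0) → z ≠ (2, 1, 0) →
      pref 2 (2, 1, 0) < pref 2 z)
    (pref2 : Ctr3 → ℕ) (hinj2 : Function.Injective pref2)
    (k2a : ∀ z : Ctr3, z.1 = 1 → z ≠ (1, 0, 0) →
      pref2 (1, 0, 0) < pref2 z)
    (k2b : ∀ z : Ctr3, z.1 = 1 → z ≠ (1, 0, 0) → z ≠ (1, 2, 0) →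
      pref2 (1, 2, 0) < pref2 z)
    (k2c : ∀ z : Ctr3, z.1 = 1 → z ≠ (1, 0, 0) → z ≠ (1, 2, 0) →
      z ≠ (1, 1, 0) → pref2 (1, 1, 0) < pref2 z)
    (pref1 : Ctr3 → ℕ) (hinj1 : Function.Injective pref1)
    (j1a : ∀ z : Ctr3, z.1 = 0 → z ≠ (0, 1, 0) →
      pref1 (0, 1, 0) < pref1 z)
    (j1b : ∀ z : Ctr3, z.1 = 0 → z ≠ (0, 1, 0) → z ≠ (0, 2, 0) →
      pref1 (0, 2, 0) < pref1 z)
    (j1c : ∀ z : Ctr3, z.1 = 0 → z ≠ (0, 1, 0) → z ≠ (0, 2, 0) →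
      z ≠ (0, 0, 0) → pref1 (0, 0, 0) < pref1 z)
    (φ : (ℕ → Ctr3 → ℕ) → Finset Ctr3)
    (hφ : ∀ p : ℕ → Ctr3 → ℕ,
      (∃ Y : Finset Ctr3, Alloc16 s Y ∧ Stable16 s p Y) →
      Alloc16 s (φ p) ∧ Stable16 s p (φ p)) :
    (∃ x ∈ φ (fun a => if a = 1 then pref2 else pref a), x.1 = 1 ∧
      ∀ y ∈ φ pref, y.1 = 1 → pref 1 x < pref 1 y) ∨
    (∃ x ∈ φ (fun a => if a = 0 then pref1 else
        if a = 1 then pref2 else pref a), x.1 = 0 ∧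
      ∀ y ∈ φ (fun a => if a = 1 then pref2 else pref a), y.1 = 0 →
        pref 0 x < pref 0 y) :=
  ex7_no_stable_strategyproof_mechanism_general s hpos h01 pref h1a h1b h2a h2b h2c h3a h3b pref2
    k2a pref1 j1a j1b φ hφ
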